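/- arXiv:1811.00500 — 2 statements merged into one kernel-verified Lean document; each statement's English description precedes it below -/
import Mathlib

section
/- Let A be a complex unital *-algebra and Θ : A → A a *-algebra automorphism with Θ∘Θ = id. For x ∈ A write x₊ := (x + Θ(x))/2 and x₋ := (x − Θ(x))/2. Let B and C be Θ-invariant unital star-subalgebras of A satisfying the graded commutation relations: for all a ∈ B and b ∈ C, a₊b₊ = b₊a₊, a₊b₋ = b₋a₊, a₋b₊ = b₊a₋, and a₋b₋ = −b₋a₋. Let N ⊆ C be a Θ-invariant unital star-subalgebra and set N₊ := {x ∈ N : Θ(x) = x}. Assume the products {ab : a ∈ B, b ∈ C} linearly span B∨C. Let E : C → A be a completely positive linear map with E(b*) = E(b)* for all b ∈ C, E(1) = 1, E∘Θ = E on C, and E(C) ⊆ N₊. Let Ẽ : B∨C → A be a linear map with Ẽ(ab) = aE(b) for all a ∈ B, b ∈ C. Then Ẽ is a normalized quasi-conditional expectation with respect to the triplet B ⊆ B∨N₊ ⊆ B∨C; explicitly: (i) Ẽ(1) = 1; (ii) Ẽ(x*) = Ẽ(x)* for all x ∈ B∨C; (iii) Ẽ(ax) = aẼ(x) for all a ∈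 B, x ∈ B∨C; (iv) the range of Ẽ is contained in B∨N₊; (v) for every m ∈ ℕ, all a_1,…,a_m ∈ B∨N₊ and all y_1,…,y_m ∈ B∨C, the element Σ_{i,j} a_i Ẽ(y_i y_j*) a_j* is positive in A. -/
open Matrix

/-- An element of a `*`-algebra is *positive* if it is a finite sum of elements of the
form `star y * y`. -/
def IsPosElem {A : Type*} [Ring A] [StarRing A] (a : A) : Prop :=
  a ∈ AddSubmonoid.closure {x : A | ∃ y : A, x = star y * y}

/-- A matrix over a `*`-algebra is *positive* if it is a finite sum of matrices of the
form `Cᴴ * C`. -/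
def MatIsPos {A : Type*} [Ring A] [StarRing A] {k : ℕ}
    (X : Matrix (Fin k) (Fin k) A) : Prop :=
  X ∈ AddSubmonoid.closure
    {Y : Matrix (Fin k) (Fin k) A | ∃ C : Matrix (Fin k) (Fin k) A, Y = Cᴴ * C}

/-- The even part `x₊ = (x + Θ(x))/2` of `x` with respect to an involution `Θ`. -/
noncomputable def evenPart {A : Type*} [Ring A] [Algebra ℂ A] (Θ : A ≃ₐ[ℂ] A) (x : A) : A :=
  (2 : ℂ)⁻¹ • (x + Θ x)

/-- The odd part `x₋ = (x − Θ(x))/2` of `x` with respect to an involution `Θ`. -/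
noncomputable def oddPart {A : Type*} [Ring A] [Algebra ℂ A] (Θ : A ≃ₐ[ℂ] A) (x : A) : A :=
  (2 : ℂ)⁻¹ • (x - Θ x)

/-!
For `a ∈ B` and `b ∈ C` the graded commutation relations give `b a = a₊ b + a₋ Θ(b)`. Since `E`
is even, this lets `Ẽ` absorb elements of `B` from the right as well, `Ẽ(b a) = a E(b)`, and it
makes every `Θ`-fixed element of `C`, in particular every value of `E`, commute with `B`. Each
claim is then checked on products `a b` and extends by linearity. For the positivity, expand all
`yᵢ` over one common family of products `b_k c_k`: then
`∑ aᵢ Ẽ(yᵢ yⱼ*) aⱼ* = ∑ v_k E(c_k c_l*) v_l*`, which is positive because `E` is completely positive.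
-/

theorem Submodule.exists_fin_family_of_forall_mem_span {R M ι : Type*} [Semiring R]
    [AddCommMonoid M] [Module R M] [Fintype ι] {S : Set M} {y : ι → M}
    (hy : ∀ i, y i ∈ span R S) :
    ∃ (n : ℕ) (z : Fin n → M), (∀ k, z k ∈ S) ∧
      ∃ f : ι → Fin n → R, y = fun i => ∑ k, f i k • z k := by
  classical
  choose T hTS hyT using fun i => mem_span_finite_of_mem_span (hy i)
  set U := Finset.univ.biUnion T
  refine ⟨U.card, fun k => U.equivFin.symm k, fun k => ?_, ?_⟩
  · obtain ⟨i, -, hi⟩ := Finset.mem_biUnion.1 (U.equivFin.symm k).2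
    exact hTS i hi
  · have hrange : ∀ i, y i ∈ span R (Set.range fun k => (U.equivFin.symm k : M)) := fun i =>
      span_mono (fun x hx => Set.mem_range.2
        ⟨U.equivFin ⟨x, Finset.mem_biUnion.2 ⟨i, Finset.mem_univ i, hx⟩⟩, by simp⟩) (hyT i)
    choose f hf using fun i => (mem_span_range_iff_exists_fun R).1 (hrange i)
    exact ⟨f, funext fun i => (hf i).symm⟩

section Positivity

variable {A : Type*} [Ring A] [StarRing A]

theorem isPosElem_star_dotProduct_self {ι : Type*} [Fintype ι] (v : ι → A) :
    IsPosElem (star v ⬝ᵥ v) :=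
  AddSubmonoid.sum_mem _ fun p _ => AddSubmonoid.subset_closure ⟨v p, rfl⟩

theorem MatIsPos.isPosElem_vecMul_dotProduct {k : ℕ} {M : Matrix (Fin k) (Fin k) A}
    (hM : MatIsPos M) (u : Fin k → A) : IsPosElem (u ᵥ* M ⬝ᵥ star u) := by
  induction hM using AddSubmonoid.closure_induction with
  | mem X hX =>
    obtain ⟨D, rfl⟩ := hX
    rw [← vecMul_vecMul, ← dotProduct_mulVec, vecMul_conjTranspose]
    exact isPosElem_star_dotProduct_self _
  | zero =>
    rw [vecMul_zero, zero_dotProduct]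
    exact AddSubmonoid.zero_mem _
  | add X Y _ _ hX hY =>
    rw [vecMul_add, add_dotProduct]
    exact add_mem hX hY

theorem MatIsPos.isPosElem_sum_mul_mul_star {k : ℕ} {M : Matrix (Fin k) (Fin k) A}
    (hM : MatIsPos M) (u : Fin k → A) : IsPosElem (∑ i, ∑ j, u i * M i j * star (u j)) := by
  convert hM.isPosElem_vecMul_dotProduct u using 1
  simp only [dotProduct, vecMul, Finset.sum_mul, Pi.star_apply]
  exact Finset.sum_comm

end Positivity

theorem sum_sum_mul_map_mul_star {A ι κ : Type*} [Ring A] [StarRing A] [Algebra ℂ A]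
    [StarModule ℂ A] [Fintype ι] [Fintype κ] (F : A →ₗ[ℂ] A) (a : ι → A) (f : ι → κ → ℂ)
    (z : κ → A) :
    ∑ i, ∑ j, a i * F ((∑ k, f i k • z k) * star (∑ l, f j l • z l)) * star (a j)
      = ∑ k, ∑ l, (∑ i, f i k • a i) * F (z k * star (z l)) * star (∑ j, f j l • a j) := by
  have hterm : ∀ i j, a i * F ((∑ k, f i k • z k) * star (∑ l, f j l • z l)) * star (a j)
      = ∑ k, ∑ l, f i k • a i * F (z k * star (z l)) * star (f j l • a j) := by
    intro i j
    rw [star_sum, Finset.sum_mul_sum]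
    simp only [map_sum, Finset.mul_sum, Finset.sum_mul]
    refine Finset.sum_congr rfl fun k _ => Finset.sum_congr rfl fun l _ => ?_
    simp only [star_smul, smul_mul_assoc, mul_smul_comm, map_smul]
  calc _ = ∑ i, ∑ j, ∑ k, ∑ l, f i k • a i * F (z k * star (z l)) * star (f j l • a j) :=
        Finset.sum_congr rfl fun i _ => Finset.sum_congr rfl fun j _ => hterm i j
    _ = ∑ i, ∑ k, ∑ j, ∑ l, f i k • a i * F (z k * star (z l)) * star (f j l • a j) :=
        Finset.sum_congr rfl fun _ _ => Finset.sum_comm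
    _ = ∑ k, ∑ i, ∑ l, ∑ j, f i k • a i * F (z k * star (z l)) * star (f j l • a j) := by
        rw [Finset.sum_comm]
        exact Finset.sum_congr rfl fun _ _ => Finset.sum_congr rfl fun _ _ => Finset.sum_comm
    _ = ∑ k, ∑ l, ∑ i, ∑ j, f i k • a i * F (z k * star (z l)) * star (f j l • a j) :=
        Finset.sum_congr rfl fun _ _ => Finset.sum_comm
    _ = _ := by
        refine Finset.sum_congr rfl fun k _ => Finset.sum_congr rfl fun l _ => ?_
        rw [star_sum, Finset.sum_mul, Finset.sum_mul_sum]

section GradedParts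

variable {A : Type*} [Ring A] [Algebra ℂ A] (Θ : A ≃ₐ[ℂ] A)

theorem evenPart_add_oddPart (x : A) : evenPart Θ x + oddPart Θ x = x := by
  simp only [evenPart, oddPart]
  module

theorem evenPart_sub_oddPart (x : A) : evenPart Θ x - oddPart Θ x = Θ x := by
  simp only [evenPart, oddPart]
  module

variable {Θ}

theorem evenPart_mem {S : Type*} [SetLike S A] [AddSubmonoidClass S A] [SMulMemClass S ℂ A]
    {s : S} (hs : ∀ x ∈ s, Θ x ∈ s) {x : A} (hx : x ∈ s) : evenPart Θ x ∈ s :=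
  SMulMemClass.smul_mem _ (add_mem hx (hs x hx))

theorem oddPart_mem {S : Type*} [SetLike S A] [AddSubgroupClass S A] [SMulMemClass S ℂ A]
    {s : S} (hs : ∀ x ∈ s, Θ x ∈ s) {x : A} (hx : x ∈ s) : oddPart Θ x ∈ s :=
  SMulMemClass.smul_mem _ (sub_mem hx (hs x hx))

variable (Θ) in
def GradedCommute (a b : A) : Prop :=
  evenPart Θ a * evenPart Θ b = evenPart Θ b * evenPart Θ a
    ∧ evenPart Θ a * oddPart Θ b = oddPart Θ b * evenPart Θ a
    ∧ oddPart Θ a * evenPart Θ b = evenPart Θ b * oddPart Θ a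
    ∧ oddPart Θ a * oddPart Θ b = -(oddPart Θ b * oddPart Θ a)

theorem GradedCommute.mul_eq {a b : A} (h : GradedCommute Θ a b) :
    b * a = evenPart Θ a * b + oddPart Θ a * Θ b := by
  obtain ⟨h₁, h₂, h₃, h₄⟩ := h
  calc b * a = (evenPart Θ b + oddPart Θ b) * (evenPart Θ a + oddPart Θ a) := by
        rw [evenPart_add_oddPart, evenPart_add_oddPart]
    _ = evenPart Θ a * (evenPart Θ b + oddPart Θ b)
        + oddPart Θ a * (evenPart Θ b - oddPart Θ b) := by
        simp only [add_mul, mul_add, mul_sub, h₁, h₂, h₃, h₄]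
        abel
    _ = evenPart Θ a * b + oddPart Θ a * Θ b := by
        rw [evenPart_add_oddPart, evenPart_sub_oddPart]

theorem GradedCommute.commute_of_apply_eq {a b : A} (h : GradedCommute Θ a b) (hb : Θ b = b) :
    Commute a b :=
  (by rw [h.mul_eq, hb, ← add_mul, evenPart_add_oddPart] : b * a = a * b).symm

end GradedParts

section ConditionalExpectation

variable {A : Type*} [Ring A] [Algebra ℂ A] {Θ : A ≃ₐ[ℂ] A}
  {S T : Type*} [SetLike S A] [SetLike T A] {B : S} {C : T} {E Etil : A →ₗ[ℂ] A}

theorem apply_mul_mul_eq_of_gradedCommute [NonUnitalSubringClass S A] [SMulMemClass S ℂ A]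
    (hgraded : ∀ a ∈ B, ∀ b ∈ C, GradedCommute Θ a b)
    (hBinv : ∀ x ∈ B, Θ x ∈ B) (hCinv : ∀ x ∈ C, Θ x ∈ C) (hEeven : ∀ b ∈ C, E (Θ b) = E b)
    (hEtil : ∀ a ∈ B, ∀ b ∈ C, Etil (a * b) = a * E b)
    {x a w : A} (hx : x ∈ B) (ha : a ∈ B) (hw : w ∈ C) :
    Etil (x * w * a) = x * a * E w := by
  rw [mul_assoc, (hgraded a ha w hw).mul_eq, mul_add, ← mul_assoc, ← mul_assoc, map_add,
    hEtil _ (mul_mem hx (evenPart_mem hBinv ha)) _ hw,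
    hEtil _ (mul_mem hx (oddPart_mem hBinv ha)) _ (hCinv w hw), hEeven w hw, ← add_mul,
    ← mul_add, evenPart_add_oddPart]

theorem map_left_mul_of_mem_span [MulMemClass S A]
    (hEtil : ∀ a ∈ B, ∀ b ∈ C, Etil (a * b) = a * E b)
    {a x : A} (ha : a ∈ B) (hx : x ∈ Submodule.span ℂ {z | ∃ a ∈ B, ∃ b ∈ C, z = a * b}) :
    Etil (a * x) = a * Etil x :=
  LinearMap.eqOn_span' (f := Etil ∘ₗ LinearMap.mulLeft ℂ a) (g := LinearMap.mulLeft ℂ a ∘ₗ Etil)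
    (by
      rintro _ ⟨b, hb, c, hc, rfl⟩
      simp only [LinearMap.comp_apply, LinearMap.mulLeft_apply, ← mul_assoc,
        hEtil _ (mul_mem ha hb) _ hc, hEtil _ hb _ hc])
    hx

theorem map_mem_of_mem_span (hEtil : ∀ a ∈ B, ∀ b ∈ C, Etil (a * b) = a * E b)
    {D : Submodule ℂ A} (hD : ∀ a ∈ B, ∀ b ∈ C, a * E b ∈ D)
    {x : A} (hx : x ∈ Submodule.span ℂ {z | ∃ a ∈ B, ∃ b ∈ C, z = a * b}) : Etil x ∈ D :=
  (Submodule.span_le (p := D.comap Etil)).2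
    (by
      rintro _ ⟨a, ha, b, hb, rfl⟩
      simpa only [SetLike.mem_coe, Submodule.mem_comap, hEtil a ha b hb] using hD a ha b hb)
    hx

variable [StarRing A] [StarModule ℂ A]

theorem map_star_of_mem_span [StarMemClass S A] [StarMemClass T A]
    (hEtil : ∀ a ∈ B, ∀ b ∈ C, Etil (a * b) = a * E b)
    (hEtil_swap : ∀ a ∈ B, ∀ b ∈ C, Etil (b * a) = a * E b)
    (hEstar : ∀ b ∈ C, E (star b) = star (E b)) (hcomm : ∀ a ∈ B, ∀ b ∈ C, Commute a (E b))
    {x : A} (hx : x ∈ Submodule.span ℂ {z | ∃ a ∈ B, ∃ b ∈ C, z = a * b}) :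
    Etil (star x) = star (Etil x) := by
  induction hx using Submodule.span_induction with
  | mem z hz =>
    obtain ⟨a, ha, b, hb, rfl⟩ := hz
    rw [star_mul, hEtil_swap _ (star_mem ha) _ (star_mem hb), hEtil _ ha _ hb, star_mul,
      (hcomm _ (star_mem ha) _ (star_mem hb)).eq, hEstar _ hb]
  | zero => simp
  | add u v _ _ hu hv => rw [star_add, map_add, map_add, star_add, hu, hv]
  | smul r u _ hu => rw [star_smul, map_smul, map_smul, star_smul, hu]

theorem isPosElem_sum_mul_apply_mul_star [StarMemClass T A]
    (hECP : ∀ (k : ℕ) (b : Fin k → A), (∀ i, b i ∈ C) →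
      MatIsPos (Matrix.of fun i j => E (star (b i) * b j)))
    (hEtil_mul_star : ∀ b ∈ B, ∀ b' ∈ B, ∀ c ∈ C, ∀ c' ∈ C,
      Etil (b * c * star (b' * c')) = b * E (c * star c') * star b')
    {ι : Type*} [Fintype ι] (a y : ι → A)
    (hy : ∀ i, y i ∈ Submodule.span ℂ {z | ∃ b ∈ B, ∃ c ∈ C, z = b * c}) :
    IsPosElem (∑ i, ∑ j, a i * Etil (y i * star (y j)) * star (a j)) := by
  obtain ⟨n, z, hz, f, rfl⟩ := Submodule.exists_fin_family_of_forall_mem_span hy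
  choose b hb c hc hbc using hz
  have hM := hECP n (fun k => star (c k)) fun k => star_mem (hc k)
  rw [sum_sum_mul_map_mul_star]
  refine (congrArg IsPosElem ?_).mpr
    (hM.isPosElem_sum_mul_mul_star fun k => (∑ i, f i k • a i) * b k)
  refine Finset.sum_congr rfl fun k _ => Finset.sum_congr rfl fun l _ => ?_
  rw [hbc, hbc, hEtil_mul_star _ (hb k) _ (hb l) _ (hc k) _ (hc l), Matrix.of_apply, star_star,
    star_mul]
  simp only [mul_assoc]

end ConditionalExpectation

theorem stmt5_general {A : Type*} [Ring A] [Algebra ℂ A] [StarRing A] [StarModule ℂ A]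
    (Θ : A ≃ₐ[ℂ] A)
    (B C : StarSubalgebra ℂ A)
    (hBinv : ∀ x ∈ B, Θ x ∈ B) (hCinv : ∀ x ∈ C, Θ x ∈ C)
    -- graded commutation relations between `B` and `C`
    (hgraded : ∀ a ∈ B, ∀ b ∈ C,
      evenPart Θ a * evenPart Θ b = evenPart Θ b * evenPart Θ a
      ∧ evenPart Θ a * oddPart Θ b = oddPart Θ b * evenPart Θ a
      ∧ oddPart Θ a * evenPart Θ b = evenPart Θ b * oddPart Θ a
      ∧ oddPart Θ a * oddPart Θ b = -(oddPart Θ b * oddPart Θ a))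
    (N : StarSubalgebra ℂ A) (hNC : N ≤ C)
    -- ordered products linearly span `B ∨ C`
    (hspan : ∀ x ∈ B ⊔ C,
      x ∈ Submodule.span ℂ {z : A | ∃ a ∈ B, ∃ b ∈ C, z = a * b})
    -- `E : C → A` completely positive, star-preserving, unital, even, with `E(C) ⊆ N₊`
    (E : A →ₗ[ℂ] A)
    (hECP : ∀ (k : ℕ) (b : Fin k → A), (∀ i, b i ∈ C) →
      MatIsPos (Matrix.of fun i j => E (star (b i) * b j)))
    (hEstar : ∀ b ∈ C, E (star b) = star (E b))
    (hE1 : E 1 = 1)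
    (hEeven : ∀ b ∈ C, E (Θ b) = E b)
    (hErange : ∀ b ∈ C, E b ∈ N ∧ Θ (E b) = E b)
    -- `Ẽ : B ∨ C → A` with `Ẽ(ab) = a E(b)`
    (Etil : A →ₗ[ℂ] A)
    (hEtil : ∀ a ∈ B, ∀ b ∈ C, Etil (a * b) = a * E b) :
    -- (i) `Ẽ` is normalized
    Etil 1 = 1
    -- (ii) `Ẽ` is a `*`-map on `B ∨ C`
    ∧ (∀ x ∈ B ⊔ C, Etil (star x) = star (Etil x))
    -- (iii) `Ẽ` is a `B`-module map
    ∧ (∀ a ∈ B, ∀ x ∈ B ⊔ C, Etil (a * x) = a * Etil x)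
    -- (iv) the range of `Ẽ` is contained in `B ∨ N₊`
    ∧ (∀ x ∈ B ⊔ C,
        Etil x ∈ StarAlgebra.adjoin ℂ ((B : Set A) ∪ {y : A | y ∈ N ∧ Θ y = y}))
    -- (v) complete positivity relative to `B ∨ N₊`
    ∧ (∀ (m : ℕ) (a y : Fin m → A),
        (∀ i, a i ∈ StarAlgebra.adjoin ℂ ((B : Set A) ∪ {y : A | y ∈ N ∧ Θ y = y})) →
        (∀ i, y i ∈ B ⊔ C) →
        IsPosElem (∑ i, ∑ j, a i * Etil (y i * star (y j)) * star (a j))) := by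
  have hEtil_swap : ∀ a ∈ B, ∀ b ∈ C, Etil (b * a) = a * E b := fun a ha b hb => by
    simpa using apply_mul_mul_eq_of_gradedCommute hgraded hBinv hCinv hEeven hEtil B.one_mem ha hb
  have hcomm : ∀ a ∈ B, ∀ b ∈ C, Commute a (E b) := fun a ha b hb =>
    GradedCommute.commute_of_apply_eq (hgraded a ha _ (hNC (hErange b hb).1)) (hErange b hb).2
  have hEtil_mul_star : ∀ b ∈ B, ∀ b' ∈ B, ∀ c ∈ C, ∀ c' ∈ C,
      Etil (b * c * star (b' * c')) = b * E (c * star c') * star b' := by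
    intro b hb b' hb' c hc c' hc'
    have hcc' : c * star c' ∈ C := mul_mem hc (star_mem hc')
    rw [star_mul, ← mul_assoc, mul_assoc b, apply_mul_mul_eq_of_gradedCommute hgraded hBinv hCinv
      hEeven hEtil hb (star_mem hb') hcc', mul_assoc, mul_assoc, (hcomm _ (star_mem hb') _ hcc').eq]
  refine ⟨by simpa [hE1] using hEtil 1 B.one_mem 1 C.one_mem,
    fun x hx => map_star_of_mem_span hEtil hEtil_swap hEstar hcomm (hspan x hx),
    fun a ha x hx => map_left_mul_of_mem_span hEtil ha (hspan x hx),
    fun x hx => map_mem_of_mem_span (D := (StarAlgebra.adjoin ℂ _).toSubalgebra.toSubmodule) hEtil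
      (fun a ha b hb => Subalgebra.mul_mem _ (StarAlgebra.subset_adjoin ℂ _ (Or.inl ha))
        (StarAlgebra.subset_adjoin ℂ _ (Or.inr (hErange b hb)))) (hspan x hx),
    fun _ a y _ hy =>
      isPosElem_sum_mul_apply_mul_star hECP hEtil_mul_star a y fun i => hspan _ (hy i)⟩

/-- Fermi case.  If `E : C → A` is an even, completely positive,
star-preserving, unital map with `E(C) ⊆ N₊` and `Ẽ : B ∨ C → A` satisfies
`Ẽ(ab) = a E(b)`, then `Ẽ` is a normalized quasi-conditional expectation with respect to
the triplet `B ⊆ B ∨ N₊ ⊆ B ∨ C`. -/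
theorem stmt5 {A : Type*} [Ring A] [Algebra ℂ A] [StarRing A] [StarModule ℂ A]
    (Θ : A ≃ₐ[ℂ] A) (hΘstar : ∀ a, Θ (star a) = star (Θ a)) (hΘinv : ∀ a, Θ (Θ a) = a)
    (B C : StarSubalgebra ℂ A)
    (hBinv : ∀ x ∈ B, Θ x ∈ B) (hCinv : ∀ x ∈ C, Θ x ∈ C)
    -- graded commutation relations between `B` and `C`
    (hgraded : ∀ a ∈ B, ∀ b ∈ C,
      evenPart Θ a * evenPart Θ b = evenPart Θ b * evenPart Θ a
      ∧ evenPart Θ a * oddPart Θ b = oddPart Θ b * evenPart Θ a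
      ∧ oddPart Θ a * evenPart Θ b = evenPart Θ b * oddPart Θ a
      ∧ oddPart Θ a * oddPart Θ b = -(oddPart Θ b * oddPart Θ a))
    (N : StarSubalgebra ℂ A) (hNC : N ≤ C) (hNinv : ∀ x ∈ N, Θ x ∈ N)
    -- ordered products linearly span `B ∨ C`
    (hspan : ∀ x ∈ B ⊔ C,
      x ∈ Submodule.span ℂ {z : A | ∃ a ∈ B, ∃ b ∈ C, z = a * b})
    -- `E : C → A` completely positive, star-preserving, unital, even, with `E(C) ⊆ N₊`
    (E : A →ₗ[ℂ] A)
    (hECP : ∀ (k : ℕ) (b : Fin k → A), (∀ i, b i ∈ C) →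
      MatIsPos (Matrix.of fun i j => E (star (b i) * b j)))
    (hEstar : ∀ b ∈ C, E (star b) = star (E b))
    (hE1 : E 1 = 1)
    (hEeven : ∀ b ∈ C, E (Θ b) = E b)
    (hErange : ∀ b ∈ C, E b ∈ N ∧ Θ (E b) = E b)
    -- `Ẽ : B ∨ C → A` with `Ẽ(ab) = a E(b)`
    (Etil : A →ₗ[ℂ] A)
    (hEtil : ∀ a ∈ B, ∀ b ∈ C, Etil (a * b) = a * E b) :
    -- (i) `Ẽ` is normalized
    Etil 1 = 1
    -- (ii) `Ẽ` is a `*`-map on `B ∨ C`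
    ∧ (∀ x ∈ B ⊔ C, Etil (star x) = star (Etil x))
    -- (iii) `Ẽ` is a `B`-module map
    ∧ (∀ a ∈ B, ∀ x ∈ B ⊔ C, Etil (a * x) = a * Etil x)
    -- (iv) the range of `Ẽ` is contained in `B ∨ N₊`
    ∧ (∀ x ∈ B ⊔ C,
        Etil x ∈ StarAlgebra.adjoin ℂ ((B : Set A) ∪ {y : A | y ∈ N ∧ Θ y = y}))
    -- (v) complete positivity relative to `B ∨ N₊`
    ∧ (∀ (m : ℕ) (a y : Fin m → A),
        (∀ i, a i ∈ StarAlgebra.adjoin ℂ ((B : Set A) ∪ {y : A | y ∈ N ∧ Θ y = y})) →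
        (∀ i, y i ∈ B ⊔ C) →
        IsPosElem (∑ i, ∑ j, a i * Etil (y i * star (y j)) * star (a j))) :=
  stmt5_general Θ B C hBinv hCinv hgraded N hNC hspan E hECP hEstar hE1 hEeven hErange Etil hEtil
end

section
/- Let A be a complex unital *-algebra, B and C unital star-subalgebras of A such that the products {bc : b ∈ B, c ∈ C} linearly span B∨C. Let E : C → A be a linear map with E(c*) = E(c)* for all c ∈ C and range commuting elementwise with B, and let E⁰ : C → C be a linear map whose range commutes elementwise with B. Let Ẽ, Ẽ⁰ : B∨C → B∨C be linear maps satisfying Ẽ(bc) = bE(c) and Ẽ⁰(bc) = bE⁰(c) = Ẽ⁰(cb) for all b ∈ B, c ∈ C. Then: (1) if Ẽ ∘ Ẽ⁰ = Ẽ, then Ẽ(bc) = Ẽ(cb) for all b ∈ B, c ∈ C, and hence Ẽ is a *-map; (2) Ẽ ∘ Ẽ⁰ = Ẽ if and only if E ∘ E⁰ = E. -/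
/-!
Under `Ẽ ∘ Ẽ⁰ = Ẽ`, both `bc` and `cb` are sent by `Ẽ⁰` to `b E⁰(c)`, so `Ẽ(bc) = Ẽ(cb)`.
This trace property moves the star past `Ẽ` on a product:
`Ẽ((bc)*) = Ẽ(c* b*) = Ẽ(b* c*) = b* E(c)* = (E(c) b)* = (b E(c))* = Ẽ(bc)*`,
and the products span `B ∨ C`. For (2), take `b = 1` in one direction; in the other,
`Ẽ(Ẽ⁰(bc)) = Ẽ(b E⁰(c)) = b E(E⁰(c)) = b E(c) = Ẽ(bc)` on the spanning products.
-/

open Submodule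

theorem LinearMap.map_star_of_mem_span {R M N : Type*} [CommSemiring R] [StarRing R]
    [AddCommMonoid M] [StarAddMonoid M] [Module R M] [StarModule R M]
    [AddCommMonoid N] [StarAddMonoid N] [Module R N] [StarModule R N]
    (f : M →ₗ[R] N) {s : Set M} (hs : ∀ x ∈ s, f (star x) = star (f x))
    {x : M} (hx : x ∈ span R s) : f (star x) = star (f x) := by
  induction hx using Submodule.span_induction with
  | mem z hz => exact hs z hz
  | zero => simp
  | add x y _ _ hx hy => rw [star_add, map_add, map_add, hx, hy, star_add]
  | smul a x _ hx => rw [star_smul, map_smul, map_smul, hx, star_smul]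

section Extension

variable {R A : Type*} [CommSemiring R] [StarRing R] [Semiring A] [StarRing A] [Algebra R A]
  [StarModule R A] {B C : StarSubalgebra R A}

theorem map_mul_comm_of_comp_eq {Etil Etil0 : A →ₗ[R] A} {E0 : A → A}
    (hEtil0 : ∀ b ∈ B, ∀ c ∈ C, Etil0 (b * c) = b * E0 c ∧ Etil0 (c * b) = b * E0 c)
    (hcomp : ∀ x ∈ B ⊔ C, Etil (Etil0 x) = Etil x)
    {b c : A} (hb : b ∈ B) (hc : c ∈ C) : Etil (b * c) = Etil (c * b) := by
  have hbBC : b ∈ B ⊔ C := le_sup_left (a := B) hb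
  have hcBC : c ∈ B ⊔ C := le_sup_right (a := B) hc
  rw [← hcomp _ (mul_mem hbBC hcBC), ← hcomp _ (mul_mem hcBC hbBC),
    (hEtil0 b hb c hc).1, (hEtil0 b hb c hc).2]

theorem map_star_mul_of_mul_comm {Etil : A →ₗ[R] A} {E : A → A}
    (hEstar : ∀ c ∈ C, E (star c) = star (E c))
    (hEcomm : ∀ c ∈ C, ∀ b ∈ B, E c * b = b * E c)
    (hEtil : ∀ b ∈ B, ∀ c ∈ C, Etil (b * c) = b * E c)
    (htrace : ∀ b ∈ B, ∀ c ∈ C, Etil (b * c) = Etil (c * b))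
    {b c : A} (hb : b ∈ B) (hc : c ∈ C) : Etil (star (b * c)) = star (Etil (b * c)) :=
  calc Etil (star (b * c)) = Etil (star c * star b) := by rw [star_mul]
    _ = star b * E (star c) := by
      rw [← htrace _ (star_mem hb) _ (star_mem hc), hEtil _ (star_mem hb) _ (star_mem hc)]
    _ = star (Etil (b * c)) := by
      rw [hEstar c hc, ← star_mul, hEcomm c hc b hb, hEtil b hb c hc]

theorem extension_comp_eq_of_comp_eq {Etil Etil0 : A →ₗ[R] A} {E E0 : A → A}
    (hspan : ∀ x ∈ B ⊔ C, x ∈ span R {z : A | ∃ b ∈ B, ∃ c ∈ C, z = b * c})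
    (hE0maps : ∀ c ∈ C, E0 c ∈ C)
    (hEtil : ∀ b ∈ B, ∀ c ∈ C, Etil (b * c) = b * E c)
    (hEtil0 : ∀ b ∈ B, ∀ c ∈ C, Etil0 (b * c) = b * E0 c)
    (hcomp : ∀ c ∈ C, E (E0 c) = E c) :
    ∀ x ∈ B ⊔ C, Etil (Etil0 x) = Etil x := by
  refine fun x hx ↦ LinearMap.eqOn_span (f := Etil ∘ₗ Etil0) ?_ (hspan x hx)
  rintro _ ⟨b, hb, c, hc, rfl⟩
  simp only [LinearMap.comp_apply]
  rw [hEtil0 b hb c hc, hEtil b hb _ (hE0maps c hc), hcomp c hc, hEtil b hb c hc]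

theorem comp_eq_of_extension_comp_eq {Etil Etil0 : A →ₗ[R] A} {E E0 : A → A}
    (hE0maps : ∀ c ∈ C, E0 c ∈ C)
    (hEtil : ∀ b ∈ B, ∀ c ∈ C, Etil (b * c) = b * E c)
    (hEtil0 : ∀ b ∈ B, ∀ c ∈ C, Etil0 (b * c) = b * E0 c)
    (hcomp : ∀ x ∈ B ⊔ C, Etil (Etil0 x) = Etil x) :
    ∀ c ∈ C, E (E0 c) = E c := by
  intro c hc
  have hone : ∀ c ∈ C, Etil c = E c := fun c hc ↦ by simpa using hEtil 1 B.one_mem c hc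
  have hE0 : Etil0 c = E0 c := by simpa using hEtil0 1 B.one_mem c hc
  rw [← hone _ (hE0maps c hc), ← hone c hc, ← hE0, hcomp c (le_sup_right (a := B) hc)]

end Extension

theorem stmt13_general {A : Type*} [Ring A] [Algebra ℂ A] [StarRing A] [StarModule ℂ A]
    (B C : StarSubalgebra ℂ A)
    (hspan : ∀ x ∈ B ⊔ C,
      x ∈ Submodule.span ℂ {z : A | ∃ b ∈ B, ∃ c ∈ C, z = b * c})
    -- `E : C → A`, star-preserving, with range commuting elementwise with `B`
    (E : A →ₗ[ℂ] A)
    (hEstar : ∀ c ∈ C, E (star c) = star (E c))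
    (hEcomm : ∀ c ∈ C, ∀ b ∈ B, E c * b = b * E c)
    -- `E⁰ : C → C`, with range commuting elementwise with `B`
    (E0 : A →ₗ[ℂ] A)
    (hE0maps : ∀ c ∈ C, E0 c ∈ C)
    -- the extensions `Ẽ, Ẽ⁰ : B ∨ C → B ∨ C`
    (Etil Etil0 : A →ₗ[ℂ] A)
    (hEtil : ∀ b ∈ B, ∀ c ∈ C, Etil (b * c) = b * E c)
    (hEtil0 : ∀ b ∈ B, ∀ c ∈ C, Etil0 (b * c) = b * E0 c ∧ Etil0 (c * b) = b * E0 c) :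
    -- (1)
    ((∀ x ∈ B ⊔ C, Etil (Etil0 x) = Etil x) →
      (∀ b ∈ B, ∀ c ∈ C, Etil (b * c) = Etil (c * b))
        ∧ (∀ x ∈ B ⊔ C, Etil (star x) = star (Etil x)))
    -- (2)
    ∧ ((∀ x ∈ B ⊔ C, Etil (Etil0 x) = Etil x) ↔ (∀ c ∈ C, E (E0 c) = E c)) := by
  have hEtil0_left : ∀ b ∈ B, ∀ c ∈ C, Etil0 (b * c) = b * E0 c :=
    fun b hb c hc ↦ (hEtil0 b hb c hc).1
  refine ⟨fun hcomp ↦ ?_, comp_eq_of_extension_comp_eq hE0maps hEtil hEtil0_left,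
    extension_comp_eq_of_comp_eq hspan hE0maps hEtil hEtil0_left⟩
  have htrace : ∀ b ∈ B, ∀ c ∈ C, Etil (b * c) = Etil (c * b) :=
    fun b hb c hc ↦ map_mul_comm_of_comp_eq hEtil0 hcomp hb hc
  refine ⟨htrace, fun x hx ↦ Etil.map_star_of_mem_span ?_ (hspan x hx)⟩
  rintro _ ⟨b, hb, c, hc, rfl⟩
  exact map_star_mul_of_mul_comm hEstar hEcomm hEtil htrace hb hc

/-- Let `Ẽ, Ẽ⁰ : B ∨ C → B ∨ C` be the extensions of `E, E⁰ : C → …`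
determined by `Ẽ(bc) = b E(c)` and `Ẽ⁰(bc) = b E⁰(c) = Ẽ⁰(cb)`.  Then:
(1) `Ẽ ∘ Ẽ⁰ = Ẽ` implies the trace-like property of `Ẽ`, hence that `Ẽ` is a `*`-map;
(2) `Ẽ ∘ Ẽ⁰ = Ẽ` if and only if `E ∘ E⁰ = E`. -/
theorem stmt13 {A : Type*} [Ring A] [Algebra ℂ A] [StarRing A] [StarModule ℂ A]
    (B C : StarSubalgebra ℂ A)
    (hspan : ∀ x ∈ B ⊔ C,
      x ∈ Submodule.span ℂ {z : A | ∃ b ∈ B, ∃ c ∈ C, z = b * c})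
    -- `E : C → A`, star-preserving, with range commuting elementwise with `B`
    (E : A →ₗ[ℂ] A)
    (hEstar : ∀ c ∈ C, E (star c) = star (E c))
    (hEcomm : ∀ c ∈ C, ∀ b ∈ B, E c * b = b * E c)
    -- `E⁰ : C → C`, with range commuting elementwise with `B`
    (E0 : A →ₗ[ℂ] A)
    (hE0maps : ∀ c ∈ C, E0 c ∈ C)
    (hE0comm : ∀ c ∈ C, ∀ b ∈ B, E0 c * b = b * E0 c)
    -- the extensions `Ẽ, Ẽ⁰ : B ∨ C → B ∨ C`
    (Etil Etil0 : A →ₗ[ℂ] A)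
    (hEtilmaps : ∀ x ∈ B ⊔ C, Etil x ∈ B ⊔ C)
    (hEtil0maps : ∀ x ∈ B ⊔ C, Etil0 x ∈ B ⊔ C)
    (hEtil : ∀ b ∈ B, ∀ c ∈ C, Etil (b * c) = b * E c)
    (hEtil0 : ∀ b ∈ B, ∀ c ∈ C, Etil0 (b * c) = b * E0 c ∧ Etil0 (c * b) = b * E0 c) :
    -- (1)
    ((∀ x ∈ B ⊔ C, Etil (Etil0 x) = Etil x) →
      (∀ b ∈ B, ∀ c ∈ C, Etil (b * c) = Etil (c * b))
        ∧ (∀ x ∈ B ⊔ C, Etil (star x) = star (Etil x)))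
    -- (2)
    ∧ ((∀ x ∈ B ⊔ C, Etil (Etil0 x) = Etil x) ↔ (∀ c ∈ C, E (E0 c) = E c)) :=
  stmt13_general B C hspan E hEstar hEcomm E0 hE0maps Etil Etil0 hEtil hEtil0
end
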